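/- Let k ≥ 0 be an integer, x̄ ∈ ℝ³, and let v ∈ NE^k(x̄) be a Nédélec vector field of degree k. Then for every point p ∈ ℝ³ and every direction vector t ∈ ℝ³, there exists a univariate real polynomial f of degree at most k such that v(p + s t) · t = f(s) for all s ∈ ℝ. In particular, the tangential component of a Nédélec field of degree k along any straight line is a polynomial of degree at most k in the line parameter. -/
import Mathlib


open MvPolynomial

/-- Cross product of vectors of `ℝ³`. -/
def cross3 (a b : Fin 3 → ℝ) : Fin 3 → ℝ :=
  ![a 1 * b 2 - a 2 * b 1, a 2 * b 0 - a 0 * b 2, a 0 * b 1 - a 1 * b 0]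

/-- Substituting affine polynomials for the variables. -/
noncomputable def lineSub (p t : Fin 3 → ℝ) : Fin 3 → Polynomial ℝ :=
  fun i => Polynomial.C (p i) + Polynomial.C (t i) * Polynomial.X

lemma natDegree_aeval_lineSub (p t : Fin 3 → ℝ) (q : MvPolynomial (Fin 3) ℝ) :
    (MvPolynomial.aeval (lineSub p t) q).natDegree ≤ q.totalDegree := by
  rw [MvPolynomial.aeval_def, MvPolynomial.eval₂_eq]
  apply Polynomial.natDegree_sum_le_of_forall_le
  intro d hd
  calc (algebraMap ℝ (Polynomial ℝ) (MvPolynomial.coeff d q)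
          * ∏ i ∈ d.support, (lineSub p t i) ^ d i).natDegree
      ≤ (algebraMap ℝ (Polynomial ℝ) (MvPolynomial.coeff d q)).natDegree
          + (∏ i ∈ d.support, (lineSub p t i) ^ d i).natDegree := Polynomial.natDegree_mul_le
    _ = (∏ i ∈ d.support, (lineSub p t i) ^ d i).natDegree := by
          simp [Polynomial.natDegree_C]
    _ ≤ ∑ i ∈ d.support, ((lineSub p t i) ^ d i).natDegree := Polynomial.natDegree_prod_le _ _
    _ ≤ ∑ i ∈ d.support, d i := by
          apply Finset.sum_le_sum
          intro i _
          calc ((lineSub p t i) ^ d i).natDegree ≤ d i * (lineSub p t i).natDegree :=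
                Polynomial.natDegree_pow_le
            _ ≤ d i * 1 := by
                apply Nat.mul_le_mul_left
                unfold lineSub
                refine le_trans (Polynomial.natDegree_add_le _ _) ?_
                simp
                refine le_trans Polynomial.natDegree_mul_le ?_
                simp
            _ = d i := mul_one _
    _ ≤ q.totalDegree := MvPolynomial.le_totalDegree hd

lemma eval_aeval_lineSub (p t : Fin 3 → ℝ) (q : MvPolynomial (Fin 3) ℝ) (s : ℝ) :
    (MvPolynomial.aeval (lineSub p t) q).eval s
      = MvPolynomial.eval (fun i => p i + s * t i) q := by
  rw [MvPolynomial.aeval_def]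
  have h := MvPolynomial.eval₂_comp_left (Polynomial.evalRingHom s)
    (algebraMap ℝ (Polynomial ℝ)) (lineSub p t) q
  simp only [Polynomial.coe_evalRingHom] at h
  rw [h]
  have h1 : (Polynomial.evalRingHom s).comp (algebraMap ℝ (Polynomial ℝ)) = RingHom.id ℝ := by
    ext x; simp
  have h2 : Polynomial.eval s ∘ lineSub p t = fun i => p i + s * t i := by
    funext i
    show Polynomial.eval s (Polynomial.C (p i) + Polynomial.C (t i) * Polynomial.X) = _
    simp only [Polynomial.eval_add, Polynomial.eval_mul, Polynomial.eval_C, Polynomial.eval_X]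
    ring
  rw [h1, h2]
  rfl

/-- The tangential component of a Nédélec field of degree `k` along any
straight line is a univariate polynomial of degree at most `k` in the line parameter. -/
theorem nedelec_tangential_trace_degree (k : ℕ) (xbar : Fin 3 → ℝ)
    (v : (Fin 3 → ℝ) → (Fin 3 → ℝ))
    (hv : ∃ w z : Fin 3 → MvPolynomial (Fin 3) ℝ,
      (∀ i, (w i).totalDegree ≤ k) ∧ (∀ i, (z i).totalDegree ≤ k) ∧
      ∀ x : Fin 3 → ℝ, v x = (fun i => eval x (w i)) + cross3 (x - xbar) (fun i => eval x (z i))) :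
    ∀ p t : Fin 3 → ℝ, ∃ f : Polynomial ℝ, f.natDegree ≤ k ∧
      ∀ s : ℝ, (∑ i, v (p + s • t) i * t i) = f.eval s := by
  obtain ⟨w, z, hw, hz, hvx⟩ := hv
  intro p t
  set a : Fin 3 → ℝ := fun i => p i - xbar i with ha
  set W : Fin 3 → Polynomial ℝ := fun i => MvPolynomial.aeval (lineSub p t) (w i) with hW
  set Z : Fin 3 → Polynomial ℝ := fun i => MvPolynomial.aeval (lineSub p t) (z i) with hZ
  refine ⟨(∑ i, Polynomial.C (t i) * W i)
      + Polynomial.C (t 0) * (Polynomial.C (a 1) * Z 2 - Polynomial.C (a 2) * Z 1)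
      + Polynomial.C (t 1) * (Polynomial.C (a 2) * Z 0 - Polynomial.C (a 0) * Z 2)
      + Polynomial.C (t 2) * (Polynomial.C (a 0) * Z 1 - Polynomial.C (a 1) * Z 0), ?_, ?_⟩
  · have hWd : ∀ i, (W i).natDegree ≤ k := fun i =>
      le_trans (natDegree_aeval_lineSub p t (w i)) (hw i)
    have hZd : ∀ i, (Z i).natDegree ≤ k := fun i =>
      le_trans (natDegree_aeval_lineSub p t (z i)) (hz i)
    have hCmul : ∀ (c : ℝ) (q : Polynomial ℝ), q.natDegree ≤ k →
        (Polynomial.C c * q).natDegree ≤ k := by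
      intro c q hq
      refine le_trans Polynomial.natDegree_mul_le ?_
      simpa using hq
    have hsub : ∀ (c₁ c₂ : ℝ) (q₁ q₂ : Polynomial ℝ), q₁.natDegree ≤ k → q₂.natDegree ≤ k →
        (Polynomial.C c₁ * q₁ - Polynomial.C c₂ * q₂).natDegree ≤ k := by
      intro c₁ c₂ q₁ q₂ h1 h2
      refine le_trans (Polynomial.natDegree_sub_le _ _) ?_
      exact max_le (hCmul _ _ h1) (hCmul _ _ h2)
    refine le_trans (Polynomial.natDegree_add_le _ _) (max_le ?_ ?_)
    · refine le_trans (Polynomial.natDegree_add_le _ _) (max_le ?_ ?_)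
      · refine le_trans (Polynomial.natDegree_add_le _ _) (max_le ?_ ?_)
        · exact Polynomial.natDegree_sum_le_of_forall_le _ _ fun i _ => hCmul _ _ (hWd i)
        · exact hCmul _ _ (hsub _ _ _ _ (hZd 2) (hZd 1))
      · exact hCmul _ _ (hsub _ _ _ _ (hZd 0) (hZd 2))
    · exact hCmul _ _ (hsub _ _ _ _ (hZd 1) (hZd 0))
  · intro s
    have hx : ∀ i, (p + s • t) i = p i + s * t i := fun i => rfl
    rw [hvx (p + s • t)]
    simp only [Fin.sum_univ_three, Pi.add_apply, Pi.sub_apply, cross3,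
      Matrix.cons_val_zero, Matrix.cons_val_one, Matrix.head_cons,
      Matrix.cons_val_two, Matrix.tail_cons,
      Polynomial.eval_add, Polynomial.eval_mul, Polynomial.eval_sub,
      Polynomial.eval_C, Polynomial.eval_finset_sum]
    have hWe : ∀ i, (W i).eval s = MvPolynomial.eval (fun i => p i + s * t i) (w i) :=
      fun i => eval_aeval_lineSub p t (w i) s
    have hZe : ∀ i, (Z i).eval s = MvPolynomial.eval (fun i => p i + s * t i) (z i) :=
      fun i => eval_aeval_lineSub p t (z i) s
    have hpe : (fun i => p i + s * t i) = p + s • t := by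
      funext i; simp [hx]
    simp only [hWe, hZe, hpe, ha, Pi.smul_apply, smul_eq_mul]
    ring
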